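/- For every integer n ≥ 2, the graph G_n has no spanning 2-trail. -/
import Mathlib


open SimpleGraph

def Gn (n : ℕ) : SimpleGraph (Fin (4 * n) ⊕ Fin (4 * n) ⊕ Fin (n - 1)) :=
  SimpleGraph.fromRel (fun a b =>
    match a, b with
    | .inl _, .inl _ => True
    | .inl i, .inr (.inl j) => i = j
    | _, .inr (.inr _) => True
    | .inr (.inr _), _ => True
    | _, _ => False)

/-- a spanning 2-trail, i.e. a spanning connected Eulerian subgraph with
maximum degree at most 4 -/
def HasSpanning2Trail {V : Type*} (G : SimpleGraph V) : Prop :=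
  ∃ H : G.Subgraph, H.verts = Set.univ ∧ H.coe.Connected ∧
    (∀ v, Even (H.neighborSet v).ncard) ∧ (∀ v, (H.neighborSet v).ncard ≤ 4)

/-- `G_n` has no spanning 2-trail. -/
theorem stmt_13 (n : ℕ) (hn : 2 ≤ n) : ¬ HasSpanning2Trail (Gn n) := by
  rintro ⟨H, hverts, hconn, heven, hdeg⟩
  have h4n : 0 < 4 * n := by omega
  -- every vertex has a neighbor in H
  have hpos : ∀ v, (H.neighborSet v).Nonempty := by
    intro v
    have hmem : ∀ u, u ∈ H.verts := by intro u; rw [hverts]; trivial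
    have : ∃ u : Fin (4 * n) ⊕ Fin (4 * n) ⊕ Fin (n - 1), u ≠ v := by
      by_cases h : v = Sum.inl ⟨0, h4n⟩
      · exact ⟨Sum.inl ⟨1, by omega⟩, by simp [h, Fin.ext_iff]⟩
      · exact ⟨Sum.inl ⟨0, h4n⟩, fun h' => h h'.symm⟩
    obtain ⟨u, hu⟩ := this
    have hreach := hconn.preconnected ⟨v, hmem v⟩ ⟨u, hmem u⟩
    obtain ⟨w⟩ := hreach
    have hnil : ¬ w.Nil := by
      apply SimpleGraph.Walk.not_nil_of_ne
      simp [Subtype.ext_iff]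
      exact fun h => hu h.symm
    have hadj := w.adj_snd hnil
    exact ⟨((w.getVert 1) : _), hadj⟩
  -- every Q2 vertex has a neighbor in Q3
  have key : ∀ j : Fin (4 * n), ∃ k : Fin (n - 1),
      H.Adj (Sum.inr (Sum.inl j)) (Sum.inr (Sum.inr k)) := by
    intro j
    have hfin : (H.neighborSet (Sum.inr (Sum.inl j))).Finite := Set.toFinite _
    have h1 : 0 < (H.neighborSet (Sum.inr (Sum.inl j))).ncard := by
      rw [Set.ncard_pos hfin]; exact hpos _
    have h2 : 1 < (H.neighborSet (Sum.inr (Sum.inl j))).ncard := by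
      obtain ⟨m, hm⟩ := heven (Sum.inr (Sum.inl j)); omega
    rw [Set.one_lt_ncard_iff hfin] at h2
    obtain ⟨a, b, ha, hb, hab⟩ := h2
    -- one of a, b differs from Sum.inl j
    have : ∃ x ∈ H.neighborSet (Sum.inr (Sum.inl j)), x ≠ Sum.inl j := by
      by_cases h : a = Sum.inl j
      · exact ⟨b, hb, fun hb' => hab (h.trans hb'.symm)⟩
      · exact ⟨a, ha, h⟩
    obtain ⟨x, hx, hxne⟩ := this
    have hG : (Gn n).Adj (Sum.inr (Sum.inl j)) x := H.adj_sub hx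
    rcases x with i | i | k
    · exfalso
      simp only [Gn, fromRel_adj] at hG
      obtain ⟨-, h | h⟩ := hG
      · exact h
      · exact hxne (by simp [h])
    · exfalso
      simp only [Gn, fromRel_adj] at hG
      obtain ⟨-, h | h⟩ := hG <;> exact h
    · exact ⟨k, hx⟩
  choose f hf using key
  have hcard : Fintype.card (Fin (n - 1)) * 4 < Fintype.card (Fin (4 * n)) := by
    simp only [Fintype.card_fin]; omega
  obtain ⟨k, hk⟩ := Fintype.exists_lt_card_fiber_of_mul_lt_card f hcard
  -- the fiber gives 5 distinct neighbors of Sum.inr (Sum.inr k)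
  set fib := Finset.univ.filter (fun j => f j = k) with hfib
  have hinj : Function.Injective
      (fun j : Fin (4 * n) => (Sum.inr (Sum.inl j) : Fin (4 * n) ⊕ Fin (4 * n) ⊕ Fin (n - 1))) := by
    intro a b hab; simpa using hab
  have himg : ((fib.image (fun j => (Sum.inr (Sum.inl j) :
      Fin (4 * n) ⊕ Fin (4 * n) ⊕ Fin (n - 1)))) : Set _) ⊆
      H.neighborSet (Sum.inr (Sum.inr k)) := by
    intro x hx
    simp only [Finset.coe_image, Set.mem_image, Finset.mem_coe, hfib,
      Finset.mem_filter, Finset.mem_univ, true_and] at hx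
    obtain ⟨j, hj, rfl⟩ := hx
    have := (hf j).symm
    rw [hj] at this
    exact this
  have h5 : 5 ≤ (H.neighborSet (Sum.inr (Sum.inr k))).ncard := by
    have hle := Set.ncard_le_ncard himg (Set.toFinite _)
    rw [Set.ncard_coe_finset, Finset.card_image_of_injective _ hinj] at hle
    omega
  have := hdeg (Sum.inr (Sum.inr k))
  omega
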